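/- Let X be a metric space, π : ℝ≥0 × X → X a continuous semiflow, γ̃ : ℝ → X an entire trajectory, and γ its discretization to ℤ. Assume the semiflow has the uniform integral-continuity property: for every ε > 0 there exists δ > 0 such that ρ(x₁,x₂) < δ implies ρ(π(t,x₁), π(t,x₂)) < ε for all t ∈ [0,1]. If γ : ℤ → X is Bohr almost periodic as a function on ℤ (for every δ > 0 the set of integer δ-almost periods is relatively dense in ℤ), then γ̃ is Bohr almost periodic as a function on ℝ, i.e., for every ε > 0 there is a relatively dense set P ⊆ ℝ of ε-almost periods of γ̃. -/

import Mathlib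

/-!
Writing `t = ⌊t⌋ + fract t`, both `γ̃ (t + τ)` and `γ̃ t` are images under the same time-`fract t`
map of the semiflow, of `γ̃ (⌊t⌋ + τ)` and `γ̃ ⌊t⌋`. For an integer `τ` these two points are
`δ`-close when `τ` is a `δ`-almost period of the discretization, and uniform continuity of the
semiflow on times in `[0, 1]` turns this into `ε`-closeness. Integer almost periods found in
`[⌈a⌉, ⌈a⌉ + L]` lie in `[a, a + L + 1]`, so relative density carries over with `L + 1`.
-/

section Trajectory

variable {X : Type*} {π : NNReal → X → X} {γt : ℝ → X}

theorem trajectory_add_eq_flow_fract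
    (hγ : ∀ (t : NNReal) (τ : ℝ), γt ((t : ℝ) + τ) = π t (γt τ)) (t τ : ℝ) :
    γt (t + τ) = π (Int.fract t).toNNReal (γt (⌊t⌋ + τ)) := by
  rw [← hγ, Real.coe_toNNReal _ (Int.fract_nonneg t), ← add_assoc, Int.fract_add_floor]

theorem dist_trajectory_add_lt_of_int_almost_period [PseudoMetricSpace X] {δ ε τ : ℝ}
    (hδ : ∀ x₁ x₂ : X, dist x₁ x₂ < δ → ∀ t : NNReal, t ≤ 1 → dist (π t x₁) (π t x₂) < ε)
    (hγ : ∀ (t : NNReal) (τ : ℝ), γt ((t : ℝ) + τ) = π t (γt τ))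
    (hτ : ∀ n : ℤ, dist (γt ((n : ℝ) + τ)) (γt (n : ℝ)) < δ) (t : ℝ) :
    dist (γt (t + τ)) (γt t) < ε := by
  have hfract : (Int.fract t).toNNReal ≤ 1 :=
    Real.toNNReal_le_one.mpr (Int.fract_lt_one t).le
  rw [trajectory_add_eq_flow_fract hγ, ← add_zero t, trajectory_add_eq_flow_fract hγ t 0,
    add_zero, add_zero]
  exact hδ _ _ (hτ ⌊t⌋) _ hfract

end Trajectory

theorem Int.cast_mem_Icc_of_mem_Icc_ceil {a : ℝ} {L τ : ℤ} (hτ : τ ∈ Set.Icc ⌈a⌉ (⌈a⌉ + L)) :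
    (τ : ℝ) ∈ Set.Icc a (a + (L + 1)) := by
  have hτ' : (⌈a⌉ : ℝ) ≤ τ ∧ (τ : ℝ) ≤ ⌈a⌉ + L := by exact_mod_cast hτ
  constructor <;> linarith [Int.le_ceil a, Int.ceil_lt_add_one a]

theorem stmt_3_general {X : Type*} [MetricSpace X]
    (π : NNReal → X → X)
    (hic : ∀ ε > (0 : ℝ), ∃ δ > (0 : ℝ), ∀ x₁ x₂ : X, dist x₁ x₂ < δ →
      ∀ t : NNReal, t ≤ 1 → dist (π t x₁) (π t x₂) < ε)
    (γt : ℝ → X)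
    (hγ : ∀ (t : NNReal) (τ : ℝ), γt ((t : ℝ) + τ) = π t (γt τ))
    (hapZ : ∀ δ > (0 : ℝ), ∃ L : ℕ, 0 < L ∧ ∀ a : ℤ,
      ∃ τ ∈ Set.Icc a (a + (L : ℤ)), ∀ n : ℤ,
        dist (γt ((n : ℝ) + (τ : ℝ))) (γt (n : ℝ)) < δ) :
    ∀ ε > (0 : ℝ), ∃ L > (0 : ℝ), ∀ a : ℝ,
      ∃ τ ∈ Set.Icc a (a + L), ∀ t : ℝ, dist (γt (t + τ)) (γt t) < ε := by
  intro ε hε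
  obtain ⟨δ, hδ, hδε⟩ := hic ε hε
  obtain ⟨L, -, hperiods⟩ := hapZ δ hδ
  refine ⟨(L : ℝ) + 1, by positivity, fun a => ?_⟩
  obtain ⟨τ, hτmem, hτ⟩ := hperiods ⌈a⌉
  refine ⟨τ, ?_, dist_trajectory_add_lt_of_int_almost_period hδε hγ hτ⟩
  exact_mod_cast Int.cast_mem_Icc_of_mem_Icc_ceil hτmem

/-- If the discretization of an entire trajectory of a semiflow (with the uniform
integral-continuity property) is Bohr almost periodic on `ℤ`, then the trajectory
itself is Bohr almost periodic on `ℝ`. -/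
theorem stmt_3 {X : Type*} [MetricSpace X]
    (π : NNReal → X → X)
    (hcont : Continuous fun p : NNReal × X => π p.1 p.2)
    (hπ0 : ∀ x : X, π 0 x = x)
    (hπadd : ∀ (s t : NNReal) (x : X), π s (π t x) = π (s + t) x)
    (hic : ∀ ε > (0 : ℝ), ∃ δ > (0 : ℝ), ∀ x₁ x₂ : X, dist x₁ x₂ < δ →
      ∀ t : NNReal, t ≤ 1 → dist (π t x₁) (π t x₂) < ε)
    (γt : ℝ → X)
    (hγ : ∀ (t : NNReal) (τ : ℝ), γt ((t : ℝ) + τ) = π t (γt τ))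
    (hapZ : ∀ δ > (0 : ℝ), ∃ L : ℕ, 0 < L ∧ ∀ a : ℤ,
      ∃ τ ∈ Set.Icc a (a + (L : ℤ)), ∀ n : ℤ,
        dist (γt ((n : ℝ) + (τ : ℝ))) (γt (n : ℝ)) < δ) :
    ∀ ε > (0 : ℝ), ∃ L > (0 : ℝ), ∀ a : ℝ,
      ∃ τ ∈ Set.Icc a (a + L), ∀ t : ℝ, dist (γt (t + τ)) (γt t) < ε :=
  stmt_3_general π hic γt hγ hapZ
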